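/- arXiv:math/0702384 — 7 statements merged into one kernel-verified Lean document; each statement's English description precedes it below -/
import Mathlib

section
/- If f : ℝ≥0 → ℝ≥0 is a nondecreasing function with 1 ≤ p ≤ q, and ∫₁^∞ (f(t)/t)^p dt/t < ∞, then ∫₁^∞ (f(t)/t)^q dt/t < ∞. -/
/-!
A nondecreasing `f` with `∫₁^∞ (f t / t)^p dt/t < ∞` has `f t / t` bounded on `[1, ∞)`: on the
window `[t, 2t]` the integrand is at least `(f t / (2t))^p / (2t)`, so `(f t / (2t))^p` is at most
twice the whole integral. Then `(f t / t)^q ≤ C^(q-p) (f t / t)^p`, which is integrable.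
-/

open MeasureTheory Set

lemma MeasureTheory.IntegrableOn.rpow_mul_of_le {g w : ℝ → ℝ} {s : Set ℝ} {p q C : ℝ}
    (h : IntegrableOn (fun x => g x ^ p * w x) s) (hs : MeasurableSet s)
    (hg : Measurable g) (hw : Measurable w) (hp : 0 ≤ p) (hpq : p ≤ q)
    (hg0 : ∀ x ∈ s, 0 ≤ g x) (hgC : ∀ x ∈ s, g x ≤ C) (hw0 : ∀ x ∈ s, 0 ≤ w x) :
    IntegrableOn (fun x => g x ^ q * w x) s := by
  refine Integrable.mono' (h.const_mul (C ^ (q - p)))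
    ((hg.pow_const q).mul hw).aestronglyMeasurable ?_
  filter_upwards [ae_restrict_mem hs] with x hx
  have hgx := hg0 x hx
  rw [Real.norm_of_nonneg (mul_nonneg (Real.rpow_nonneg hgx q) (hw0 x hx))]
  calc g x ^ q * w x = g x ^ (q - p) * (g x ^ p * w x) := by
        rw [← add_sub_cancel p q, Real.rpow_add_of_nonneg hgx hp (by linarith)]
        ring_nf
    _ ≤ C ^ (q - p) * (g x ^ p * w x) := by
        gcongr
        · exact mul_nonneg (Real.rpow_nonneg hgx p) (hw0 x hx)
        · exact hgC x hx

section Monotone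

variable {f : ℝ → ℝ} {p : ℝ}

lemma Monotone.rpow_div_two_mul_div_two_le_setIntegral_Icc (hf : Monotone f) (hf0 : ∀ t, 0 ≤ f t)
    (hp : 0 ≤ p) {t : ℝ} (ht : 0 < t)
    (hint : IntegrableOn (fun x => (f x / x) ^ p * (1 / x)) (Icc t (2 * t))) :
    (f t / (2 * t)) ^ p / 2 ≤ ∫ x in Icc t (2 * t), (f x / x) ^ p * (1 / x) := by
  have hlower : ∀ x ∈ Icc t (2 * t),
      (f t / (2 * t)) ^ p * (1 / (2 * t)) ≤ (f x / x) ^ p * (1 / x) := by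
    rintro x ⟨htx, hx2t⟩
    have hx : 0 < x := ht.trans_le htx
    have := hf0 t
    have := hf0 x
    gcongr
    exact hf htx
  calc (f t / (2 * t)) ^ p / 2
      = ∫ _ in Icc t (2 * t), (f t / (2 * t)) ^ p * (1 / (2 * t)) := by
        rw [setIntegral_const, measureReal_def, Real.volume_Icc,
          ENNReal.toReal_ofReal (by linarith), smul_eq_mul]
        field_simp
        ring
    _ ≤ ∫ x in Icc t (2 * t), (f x / x) ^ p * (1 / x) :=
        setIntegral_mono_on (integrableOn_const measure_Icc_lt_top.ne) hint
          measurableSet_Icc hlower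

lemma Monotone.div_le_of_integrableOn_Ici (hf : Monotone f) (hf0 : ∀ t, 0 ≤ f t) (hp : 0 < p)
    {a : ℝ} (ha : 0 < a) (hCp : IntegrableOn (fun x => (f x / x) ^ p * (1 / x)) (Ici a))
    {t : ℝ} (ht : a ≤ t) :
    f t / t ≤ 2 * (2 * ∫ x in Ici a, (f x / x) ^ p * (1 / x)) ^ p⁻¹ := by
  have ht0 : 0 < t := ha.trans_le ht
  have hwindow : Icc t (2 * t) ⊆ Ici a := fun x hx => ht.trans hx.1
  have hnonneg : ∀ x ∈ Ici a, 0 ≤ (f x / x) ^ p * (1 / x) := fun x hx => by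
    have := hf0 x
    have := ha.trans_le hx
    positivity
  have hI : (f t / (2 * t)) ^ p ≤ 2 * ∫ x in Ici a, (f x / x) ^ p * (1 / x) := by
    have := (hf.rpow_div_two_mul_div_two_le_setIntegral_Icc hf0 hp.le ht0
      (hCp.mono_set hwindow)).trans (setIntegral_mono_set hCp
        ((ae_restrict_iff' measurableSet_Ici).2 (ae_of_all _ hnonneg)) hwindow.eventuallyLE)
    linarith
  have hft := hf0 t
  have hroot := (Real.le_rpow_inv_iff_of_pos (by positivity)
    (le_trans (by positivity) hI) hp).2 hI
  calc f t / t = 2 * (f t / (2 * t)) := by field_simp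
    _ ≤ _ := by gcongr

end Monotone

/-- Condition (C_p) is monotone in p: if `f` is nondecreasing nonnegative and
`∫₁^∞ (f t / t)^p dt/t < ∞`, then the same holds with exponent `q ≥ p`. -/
theorem stmt0 (f : ℝ → ℝ) (hf : Monotone f) (hf0 : ∀ t, 0 ≤ f t)
    (p q : ℝ) (hp : 1 ≤ p) (hpq : p ≤ q)
    (hCp : IntegrableOn (fun t => (f t / t) ^ p * (1 / t)) (Ici (1 : ℝ))) :
    IntegrableOn (fun t => (f t / t) ^ q * (1 / t)) (Ici (1 : ℝ)) := by
  have hpos : ∀ t ∈ Ici (1 : ℝ), 0 < t := fun t ht => one_pos.trans_le ht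
  exact hCp.rpow_mul_of_le measurableSet_Ici (hf.measurable.div measurable_id)
    (measurable_const.div measurable_id) (by linarith) hpq
    (fun t ht => div_nonneg (hf0 t) (hpos t ht).le)
    (fun t ht => hf.div_le_of_integrableOn_Ici hf0 (by linarith) one_pos hCp ht)
    (fun t ht => (one_div_pos.2 (hpos t ht)).le)
end

section
/- If f : ℝ≥0 → ℝ≥0 is a nondecreasing function satisfying ∫₁^∞ (f(t)/t)^p dt/t < ∞ for some p ≥ 1, then f(t)/t is bounded, i.e. there exists C > 0 with f(t) ≤ C·t for all t ≥ 1. -/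
open MeasureTheory Set

/-!
Monotonicity of `f` makes the integrand on the block `[t, 2t]` at least
`(f t / (2t))^p / (2t)`, so the block alone contributes `(f t / (2t))^p / 2` to the integral.
Hence `(f t / (2t))^p` is bounded by twice the (absolute) integral, uniformly in `t ≥ 1`.
-/

theorem Monotone.div_rpow_mul_one_div_le {f : ℝ → ℝ} (hf : Monotone f) {p t s : ℝ}
    (hp : 0 ≤ p) (ht : 0 < t) (hft : 0 ≤ f t) (hs : s ∈ Icc t (2 * t)) :
    (f t / (2 * t)) ^ p * (1 / (2 * t)) ≤ (f s / s) ^ p * (1 / s) := by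
  have hs0 : 0 < s := ht.trans_le hs.1
  have hfs : f t ≤ f s := hf hs.1
  have hbase : f t / (2 * t) ≤ f s / s := div_le_div₀ (hft.trans hfs) hfs hs0 hs.2
  have hft2 : 0 ≤ f t / (2 * t) := div_nonneg hft (by positivity)
  gcongr
  · exact Real.rpow_nonneg (hft2.trans hbase) p
  · exact hs.2

theorem mul_measureReal_le_setIntegral_norm {α : Type*} [MeasurableSpace α] {μ : Measure α}
    {g : α → ℝ} {s S : Set α} {c : ℝ} (hg : IntegrableOn g S μ) (hs : MeasurableSet s)
    (hsS : s ⊆ S) (hμs : μ s ≠ ⊤) (hc : ∀ x ∈ s, c ≤ g x) :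
    c * μ.real s ≤ ∫ x in S, ‖g x‖ ∂μ :=
  calc c * μ.real s ≤ ∫ x in s, ‖g x‖ ∂μ :=
        setIntegral_ge_of_const_le_real hs hμs (fun x hx => (hc x hx).trans (Real.le_norm_self _))
          (hg.mono_set hsS).norm
    _ ≤ ∫ x in S, ‖g x‖ ∂μ :=
        setIntegral_mono_set hg.norm (.of_forall fun _ => norm_nonneg _)
          hsS.eventuallyLE

theorem Monotone.div_rpow_le_two_mul_integral {f : ℝ → ℝ} (hf : Monotone f) {p t : ℝ}
    (hp : 0 ≤ p) (hCp : IntegrableOn (fun t => (f t / t) ^ p * (1 / t)) (Ici 1))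
    (ht : 1 ≤ t) (hft : 0 ≤ f t) :
    (f t / (2 * t)) ^ p ≤ 2 * ∫ s in Ici (1 : ℝ), ‖(f s / s) ^ p * (1 / s)‖ := by
  have ht0 : 0 < t := one_pos.trans_le ht
  have hblock := mul_measureReal_le_setIntegral_norm hCp measurableSet_Icc
    (fun s hs => ht.trans hs.1) (by simp [Real.volume_Icc])
    (fun s hs => hf.div_rpow_mul_one_div_le hp ht0 hft hs)
  have hvol : volume.real (Icc t (2 * t)) = t := by
    rw [measureReal_def, Real.volume_Icc, ENNReal.toReal_ofReal (by linarith)]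
    ring
  have hhalf : 1 / (2 * t) * t = 1 / 2 := by field_simp
  rw [hvol, mul_assoc, hhalf] at hblock
  linarith

theorem stmt1_general (f : ℝ → ℝ) (hf : Monotone f)
    (p : ℝ) (hp : 1 ≤ p)
    (hCp : IntegrableOn (fun t => (f t / t) ^ p * (1 / t)) (Ici (1 : ℝ))) :
    ∃ C > 0, ∀ t : ℝ, 1 ≤ t → f t ≤ C * t := by
  have hp0 : 0 < p := one_pos.trans_le hp
  set J := ∫ s in Ici (1 : ℝ), ‖(f s / s) ^ p * (1 / s)‖
  have hJ : 0 ≤ 2 * J := mul_nonneg zero_le_two (integral_nonneg fun _ => norm_nonneg _)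
  refine ⟨2 * (2 * J) ^ p⁻¹ + 1, by positivity, fun t ht => ?_⟩
  have ht0 : 0 < t := one_pos.trans_le ht
  rcases le_or_gt (f t) 0 with hft | hft
  · exact hft.trans (by positivity)
  have hroot : f t / (2 * t) ≤ (2 * J) ^ p⁻¹ :=
    (Real.le_rpow_inv_iff_of_pos (by positivity) hJ hp0).2
      (hf.div_rpow_le_two_mul_integral hp0.le hCp ht hft.le)
  rw [div_le_iff₀ (by positivity)] at hroot
  nlinarith

/-- If a nondecreasing nonnegative `f` satisfies `∫₁^∞ (f t / t)^p dt/t < ∞` for some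
`p ≥ 1`, then `f(t)/t` is bounded: there is `C > 0` with `f t ≤ C * t` for all `t ≥ 1`. -/
theorem stmt1 (f : ℝ → ℝ) (hf : Monotone f) (hf0 : ∀ t, 0 ≤ f t)
    (p : ℝ) (hp : 1 ≤ p)
    (hCp : IntegrableOn (fun t => (f t / t) ^ p * (1 / t)) (Ici (1 : ℝ))) :
    ∃ C > 0, ∀ t : ℝ, 1 ≤ t → f t ≤ C * t :=
  stmt1_general f hf p hp hCp
end

section
/- Let (X, d, μ) be a metric measure space, p ≥ 1, J : ℝ≥0 → ℝ≥0 nondecreasing. Suppose X has Property A(J,p): for every n ∈ ℕ there is ψ_n : X → L^p(X,μ) with ‖ψ_{n,x}‖_p ≥ J(n), ‖ψ_{n,x} − ψ_{n,y}‖_p ≤ d(x,y), and ψ_{n,x} supported in the closed ball B(x,n). Fix o ∈ X and an increasing f : ℝ≥0 → ℝ≥0 with S := ∑_{k≥0} (f(2^k)/J(2^k))^p < ∞. Define F : X → ⊕_{ℓ^p} L^p(X,μ) by F(x) = ⊕_k (f(2^k)/J(2^k))(ψ_{2^k,x} − ψ_{2^k,o}). Then ‖F(x) − F(y)‖_p ≤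 S^{1/p}·d(x,y) for all x,y, and ‖F(x) − F(y)‖_p ≥ 2^{1/p}·f(2^k) whenever d(x,y) > 2·2^k. -/
/-!
With `c_k = f(2^k)/J(2^k)`, the `k`-th coordinate of `F x - F y` has norm at most `c_k d(x,y)`
and `∑ c_k ^ p = S`, which gives the upper bound. For the lower bound, `d(x,y) > 2·2^k` forces
`ψ_{2^k,x}` and `ψ_{2^k,y}` to have a.e. disjoint supports, so the `p`-th powers of their norms
add up and `‖ψ_{2^k,x} - ψ_{2^k,y}‖ ≥ 2^{1/p} J(2^k)`; the `k`-th coordinate alone then suffices.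
-/

open MeasureTheory Metric

open scoped ENNReal

section DisjointSupport

variable {α E : Type*} [MeasurableSpace α] {μ : Measure α} [NormedAddCommGroup E] {p : ℝ≥0∞}

theorem eLpNorm_sub_rpow_of_ae_disjoint {f g : α → E} (hp0 : p ≠ 0) (hp : p ≠ ∞)
    (hg : AEStronglyMeasurable g μ) (hfg : ∀ᵐ z ∂μ, f z = 0 ∨ g z = 0) :
    eLpNorm (f - g) p μ ^ p.toReal = eLpNorm f p μ ^ p.toReal + eLpNorm g p μ ^ p.toReal := by
  have hq : 0 < p.toReal := ENNReal.toReal_pos hp0 hp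
  simp only [eLpNorm_eq_eLpNorm' hp0 hp, ← lintegral_rpow_enorm_eq_rpow_eLpNorm' hq]
  rw [← lintegral_add_right' _ (hg.enorm.pow_const _)]
  refine lintegral_congr_ae ?_
  filter_upwards [hfg] with z hz
  rcases hz with hz | hz <;> simp [hz, ENNReal.zero_rpow_of_pos hq]

theorem Lp.norm_sub_rpow_of_ae_disjoint [Fact (1 ≤ p)] (hp : p ≠ ∞) (g h : Lp E p μ)
    (hgh : ∀ᵐ z ∂μ, g z = 0 ∨ h z = 0) :
    ‖g - h‖ ^ p.toReal = ‖g‖ ^ p.toReal + ‖h‖ ^ p.toReal := by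
  have hp0 : p ≠ 0 := (zero_lt_one.trans_le Fact.out).ne'
  simp only [Lp.norm_def, ENNReal.toReal_rpow]
  rw [eLpNorm_congr_ae (Lp.coeFn_sub g h),
    eLpNorm_sub_rpow_of_ae_disjoint hp0 hp (Lp.aestronglyMeasurable h) hgh,
    ENNReal.toReal_add (ENNReal.rpow_ne_top_of_nonneg ENNReal.toReal_nonneg (Lp.eLpNorm_ne_top g))
      (ENNReal.rpow_ne_top_of_nonneg ENNReal.toReal_nonneg (Lp.eLpNorm_ne_top h))]

theorem Lp.two_rpow_inv_mul_le_norm_sub_of_ae_disjoint [Fact (1 ≤ p)] (hp : p ≠ ∞)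
    {g h : Lp E p μ} (hgh : ∀ᵐ z ∂μ, g z = 0 ∨ h z = 0) {J : ℝ} (hJ : 0 ≤ J)
    (hg : J ≤ ‖g‖) (hh : J ≤ ‖h‖) :
    2 ^ p.toReal⁻¹ * J ≤ ‖g - h‖ := by
  have hq : 0 < p.toReal := ENNReal.toReal_pos (zero_lt_one.trans_le Fact.out).ne' hp
  have hpow : 2 * J ^ p.toReal ≤ ‖g - h‖ ^ p.toReal := by
    rw [Lp.norm_sub_rpow_of_ae_disjoint hp g h hgh, two_mul]
    gcongr
  calc 2 ^ p.toReal⁻¹ * J = (2 * J ^ p.toReal) ^ p.toReal⁻¹ := by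
        rw [Real.mul_rpow zero_le_two (by positivity), Real.rpow_rpow_inv hJ hq.ne']
    _ ≤ (‖g - h‖ ^ p.toReal) ^ p.toReal⁻¹ := by gcongr
    _ = ‖g - h‖ := Real.rpow_rpow_inv (norm_nonneg _) hq.ne'

end DisjointSupport

theorem ae_eq_zero_or_eq_zero_of_ae_support_subset_closedBall {X M : Type*} [PseudoMetricSpace X]
    [MeasurableSpace X] {μ : Measure X} [Zero M] {g h : X → M} {x y : X} {r s : ℝ}
    (hg : ∀ᵐ z ∂μ, z ∉ closedBall x r → g z = 0) (hh : ∀ᵐ z ∂μ, z ∉ closedBall y s → h z = 0)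
    (hxy : r + s < dist x y) : ∀ᵐ z ∂μ, g z = 0 ∨ h z = 0 := by
  filter_upwards [hg, hh] with z hgz hhz
  by_cases hzx : z ∈ closedBall x r
  · refine Or.inr (hhz fun hzy => ?_)
    rw [mem_closedBall] at hzx hzy
    linarith [dist_triangle_left x y z]
  · exact Or.inl (hgz hzx)

theorem norm_rpow_le_of_norm_le_mul {F : Type*} [SeminormedAddGroup F] {v : F} {c d q : ℝ}
    (hc : 0 ≤ c) (hd : 0 ≤ d) (hq : 0 ≤ q) (hv : ‖v‖ ≤ c * d) : ‖v‖ ^ q ≤ c ^ q * d ^ q :=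
  (Real.rpow_le_rpow (norm_nonneg v) hv hq).trans_eq (Real.mul_rpow hc hd)

section WeightedSum

variable {ι : Type*} {E : ι → Type*} [∀ i, NormedAddCommGroup (E i)] {p : ℝ≥0∞} {c : ι → ℝ}
  {d : ℝ}

theorem memℓp_of_norm_le_mul (hp : 0 < p.toReal) {a : ∀ i, E i} (hc : ∀ i, 0 ≤ c i) (hd : 0 ≤ d)
    (hcp : Summable fun i => c i ^ p.toReal) (ha : ∀ i, ‖a i‖ ≤ c i * d) : Memℓp a p :=
  memℓp_gen <| (hcp.mul_right (d ^ p.toReal)).of_nonneg_of_le (fun i => by positivity)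
    fun i => norm_rpow_le_of_norm_le_mul (hc i) hd hp.le (ha i)

theorem lp.norm_le_of_norm_le_mul (hp : 0 < p.toReal) {S : ℝ} (hc : ∀ i, 0 ≤ c i) (hd : 0 ≤ d)
    (hS : HasSum (fun i => c i ^ p.toReal) S) {a : lp E p} (ha : ∀ i, ‖a i‖ ≤ c i * d) :
    ‖a‖ ≤ S ^ p.toReal⁻¹ * d := by
  have hS0 : 0 ≤ S := hS.nonneg fun i => Real.rpow_nonneg (hc i) _
  refine lp.norm_le_of_tsum_le hp (by positivity) ?_
  rw [Real.mul_rpow (by positivity) hd, Real.rpow_inv_rpow hS0 hp.ne', ← hS.tsum_eq,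
    ← tsum_mul_right]
  exact ((lp.memℓp a).summable hp).tsum_le_tsum
    (fun i => norm_rpow_le_of_norm_le_mul (hc i) hd hp.le (ha i)) (hS.summable.mul_right _)

end WeightedSum

theorem stmt7_general {X : Type*} [MetricSpace X] [MeasurableSpace X] (μ : Measure X)
    (p : ℝ) (hp : 1 ≤ p) [Fact (1 ≤ ENNReal.ofReal p)] (J : ℝ → ℝ) (hJpos : ∀ t, 1 ≤ t → 0 < J t)
    (ψ : ℕ → X → Lp ℝ (ENNReal.ofReal p) μ)
    (hnorm : ∀ (n : ℕ) (x : X), J n ≤ ‖ψ n x‖)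
    (hlip : ∀ (n : ℕ) (x y : X), ‖ψ n x - ψ n y‖ ≤ dist x y)
    (hsupp : ∀ (n : ℕ) (x : X), ∀ᵐ z ∂μ, z ∉ closedBall x (n : ℝ) → (ψ n x : X → ℝ) z = 0)
    (o : X) (f : ℝ → ℝ) (hf0 : ∀ t, 0 ≤ f t) (S : ℝ)
    (hS : HasSum (fun k : ℕ => (f (2 ^ k) / J (2 ^ k)) ^ p) S) :
    ∃ F : X → lp (fun _ : ℕ => Lp ℝ (ENNReal.ofReal p) μ) (ENNReal.ofReal p),
      (∀ (x : X) (k : ℕ),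
        (F x : ∀ _ : ℕ, Lp ℝ (ENNReal.ofReal p) μ) k =
          (f (2 ^ k) / J (2 ^ k)) • (ψ (2 ^ k) x - ψ (2 ^ k) o)) ∧
      (∀ x y : X, ‖F x - F y‖ ≤ S ^ (1 / p) * dist x y) ∧
      (∀ (x y : X) (k : ℕ), 2 * 2 ^ k < dist x y →
        (2 : ℝ) ^ (1 / p) * f (2 ^ k) ≤ ‖F x - F y‖) := by
  have hp0 : 0 < p := zero_lt_one.trans_le hp
  have hq : (ENNReal.ofReal p).toReal = p := ENNReal.toReal_ofReal hp0.le
  set c : ℕ → ℝ := fun k => f (2 ^ k) / J (2 ^ k)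
  have hJ : ∀ k : ℕ, 0 < J (2 ^ k) := fun k => hJpos _ (one_le_pow₀ one_le_two)
  have hc : ∀ k, 0 ≤ c k := fun k => div_nonneg (hf0 _) (hJ k).le
  have hq0 : 0 < (ENNReal.ofReal p).toReal := by rwa [hq]
  have hcS : HasSum (fun k => c k ^ (ENNReal.ofReal p).toReal) S := by rwa [hq]
  have hbound (x y : X) (k : ℕ) : ‖c k • (ψ (2 ^ k) x - ψ (2 ^ k) y)‖ ≤ c k * dist x y := by
    rw [norm_smul, Real.norm_of_nonneg (hc k)]
    exact mul_le_mul_of_nonneg_left (hlip _ x y) (hc k)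
  let F (x : X) : lp (fun _ : ℕ => Lp ℝ (ENNReal.ofReal p) μ) (ENNReal.ofReal p) :=
    ⟨fun k => c k • (ψ (2 ^ k) x - ψ (2 ^ k) o),
      memℓp_of_norm_le_mul hq0 hc dist_nonneg hcS.summable (hbound x o)⟩
  have hFsub (x y : X) (k : ℕ) : (F x - F y) k = c k • (ψ (2 ^ k) x - ψ (2 ^ k) y) := by
    change c k • (ψ (2 ^ k) x - ψ (2 ^ k) o) - c k • (ψ (2 ^ k) y - ψ (2 ^ k) o) = _
    rw [← smul_sub, sub_sub_sub_cancel_right]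
  refine ⟨F, fun x k => rfl, fun x y => ?_, fun x y k hxy => ?_⟩
  · calc ‖F x - F y‖ ≤ S ^ (ENNReal.ofReal p).toReal⁻¹ * dist x y :=
          lp.norm_le_of_norm_le_mul hq0 hc dist_nonneg hcS fun k => hFsub x y k ▸ hbound x y k
      _ = S ^ (1 / p) * dist x y := by rw [hq, one_div]
  · have hdisj := ae_eq_zero_or_eq_zero_of_ae_support_subset_closedBall (hsupp (2 ^ k) x)
      (hsupp (2 ^ k) y) (by push_cast; linarith)
    have hψ := Lp.two_rpow_inv_mul_le_norm_sub_of_ae_disjoint ENNReal.ofReal_ne_top hdisj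
      (hJ k).le (by exact_mod_cast hnorm (2 ^ k) x) (by exact_mod_cast hnorm (2 ^ k) y)
    rw [hq] at hψ
    calc 2 ^ (1 / p) * f (2 ^ k) = c k * (2 ^ p⁻¹ * J (2 ^ k)) := by
          dsimp only [c]
          rw [one_div, mul_left_comm, div_mul_cancel₀ _ (hJ k).ne']
      _ ≤ c k * ‖ψ (2 ^ k) x - ψ (2 ^ k) y‖ := by gcongr; exact hc k
      _ = ‖(F x - F y) k‖ := by rw [hFsub, norm_smul, Real.norm_of_nonneg (hc k)]
      _ ≤ ‖F x - F y‖ := lp.norm_apply_le_norm (by simpa using hp0) _ k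

/-- Property A(J,p) yields a large-scale Lipschitz uniform embedding into
`⊕_{ℓ^p} L^p(X,μ)`: with `ψ_{n,x}` as in A(J,p), `o ∈ X`,
`S = ∑ (f(2^k)/J(2^k))^p < ∞`, the map
`F x = ⊕_k (f(2^k)/J(2^k)) (ψ_{2^k,x} − ψ_{2^k,o})` satisfies
`‖F x − F y‖ ≤ S^{1/p} d(x,y)` and `‖F x − F y‖ ≥ 2^{1/p} f(2^k)` when `d(x,y) > 2·2^k`. -/
theorem stmt7 {X : Type*} [MetricSpace X] [MeasurableSpace X] (μ : Measure X)
    (p : ℝ) (hp : 1 ≤ p) [Fact (1 ≤ ENNReal.ofReal p)] (J : ℝ → ℝ) (hJ : Monotone J) (hJpos : ∀ t, 1 ≤ t → 0 < J t)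
    (ψ : ℕ → X → Lp ℝ (ENNReal.ofReal p) μ)
    (hnorm : ∀ (n : ℕ) (x : X), J n ≤ ‖ψ n x‖)
    (hlip : ∀ (n : ℕ) (x y : X), ‖ψ n x - ψ n y‖ ≤ dist x y)
    (hsupp : ∀ (n : ℕ) (x : X), ∀ᵐ z ∂μ, z ∉ closedBall x (n : ℝ) → (ψ n x : X → ℝ) z = 0)
    (o : X) (f : ℝ → ℝ) (hf : Monotone f) (hf0 : ∀ t, 0 ≤ f t) (S : ℝ)
    (hS : HasSum (fun k : ℕ => (f (2 ^ k) / J (2 ^ k)) ^ p) S) :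
    ∃ F : X → lp (fun _ : ℕ => Lp ℝ (ENNReal.ofReal p) μ) (ENNReal.ofReal p),
      (∀ (x : X) (k : ℕ),
        (F x : ∀ _ : ℕ, Lp ℝ (ENNReal.ofReal p) μ) k =
          (f (2 ^ k) / J (2 ^ k)) • (ψ (2 ^ k) x - ψ (2 ^ k) o)) ∧
      (∀ x y : X, ‖F x - F y‖ ≤ S ^ (1 / p) * dist x y) ∧
      (∀ (x y : X) (k : ℕ), 2 * 2 ^ k < dist x y →
        (2 : ℝ) ^ (1 / p) * f (2 ^ k) ≤ ‖F x - F y‖) :=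
  stmt7_general μ p hp J hJpos ψ hnorm hlip hsupp o f hf0 S hS
end

section
/- Let X be a finite metric space satisfying P(J,p) at scale r (with p > 1), with J(r) > 0 and J(r) < r. Then every bi-Lipschitz embedding F of X into an L^p-space has distortion at least r/J(r); that is, c_p(X) ≥ r/J(r). -/
/-!
Apply the Poincaré inequality to each coordinate function `x ↦ F x ω` and integrate over `ω`:
since `‖f‖ ^ p = ∫ |f ω| ^ p` in `Lᵖ` and the integrals over the finite set `X × X` are finite
sums, the inequality holds with `|φ x - φ y|` replaced by `‖F x - F y‖`. On the support of `P`
the lower Lipschitz bound makes the left side at least `(r / (A * J r)) ^ p`, and the upper one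
makes the right side at most `B ^ p`.
-/

open MeasureTheory Set

namespace MeasureTheory

variable {Ω : Type*} [MeasurableSpace Ω] {ν : Measure Ω} {p : ℝ} [Fact (1 ≤ ENNReal.ofReal p)]

lemma Lp.integrable_abs_div_rpow (f : Lp ℝ (ENNReal.ofReal p) ν) {c : ℝ} (hc : 0 ≤ c) :
    Integrable (fun ω => (|f ω| / c) ^ p) ν := by
  have hp : 0 < p := zero_lt_one.trans_le (ENNReal.one_le_ofReal.mp Fact.out)
  have := (Lp.memLp f).integrable_norm_rpow (by simpa using hp) ENNReal.ofReal_ne_top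
  simp only [ENNReal.toReal_ofReal hp.le, Real.norm_eq_abs] at this
  simpa only [Real.div_rpow (abs_nonneg _) hc] using this.div_const (c ^ p)

lemma Lp.integral_abs_div_rpow (f : Lp ℝ (ENNReal.ofReal p) ν) {c : ℝ} (hc : 0 ≤ c) :
    ∫ ω, (|f ω| / c) ^ p ∂ν = (‖f‖ / c) ^ p := by
  have hp : 0 < p := zero_lt_one.trans_le (ENNReal.one_le_ofReal.mp Fact.out)
  simp_rw [Real.div_rpow (abs_nonneg _) hc, Real.div_rpow (norm_nonneg _) hc, integral_div]
  congr 1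
  rw [Lp.norm_def, (Lp.memLp f).eLpNorm_eq_integral_rpow_norm (by simpa using hp)
    ENNReal.ofReal_ne_top, ENNReal.toReal_ofReal hp.le, ENNReal.toReal_ofReal (by positivity),
    Real.rpow_inv_rpow (by positivity) hp.ne']
  simp [Real.norm_eq_abs]

section

variable {Z : Type*} [Fintype Z]

lemma Lp.integrable_sum_smul_abs_div_rpow (w : Z → ℝ) (u : Z → Lp ℝ (ENNReal.ofReal p) ν)
    {c : Z → ℝ} (hc : ∀ z, 0 ≤ c z) :
    Integrable (fun ω => ∑ z, w z • (|u z ω| / c z) ^ p) ν :=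
  integrable_finsetSum _ fun z _ => (Lp.integrable_abs_div_rpow (u z) (hc z)).fun_smul (w z)

lemma Lp.sum_smul_norm_div_rpow_eq_integral (w : Z → ℝ) (u : Z → Lp ℝ (ENNReal.ofReal p) ν)
    {c : Z → ℝ} (hc : ∀ z, 0 ≤ c z) :
    ∑ z, w z • (‖u z‖ / c z) ^ p = ∫ ω, ∑ z, w z • (|u z ω| / c z) ^ p ∂ν := by
  rw [integral_finsetSum _ fun z _ => (Lp.integrable_abs_div_rpow (u z) (hc z)).fun_smul (w z)]
  simp_rw [integral_smul, Lp.integral_abs_div_rpow _ (hc _)]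

end

theorem integral_norm_sub_div_rpow_le_of_forall_real {X : Type*} [Fintype X] [MeasurableSpace X]
    [MeasurableSingletonClass X] (P Q : Measure (X × X)) [IsFiniteMeasure P]
    [IsFiniteMeasure Q] {c₁ c₂ : X × X → ℝ} (hc₁ : ∀ z, 0 ≤ c₁ z) (hc₂ : ∀ z, 0 ≤ c₂ z)
    (h : ∀ φ : X → ℝ, ∫ z, (|φ z.1 - φ z.2| / c₁ z) ^ p ∂P ≤
      ∫ z, (|φ z.1 - φ z.2| / c₂ z) ^ p ∂Q)
    (F : X → Lp ℝ (ENNReal.ofReal p) ν) :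
    ∫ z, (‖F z.1 - F z.2‖ / c₁ z) ^ p ∂P ≤ ∫ z, (‖F z.1 - F z.2‖ / c₂ z) ^ p ∂Q := by
  rw [integral_fintype .of_finite, integral_fintype .of_finite,
    Lp.sum_smul_norm_div_rpow_eq_integral _ _ hc₁, Lp.sum_smul_norm_div_rpow_eq_integral _ _ hc₂]
  refine integral_mono_ae (Lp.integrable_sum_smul_abs_div_rpow _ _ hc₁)
    (Lp.integrable_sum_smul_abs_div_rpow _ _ hc₂) ?_
  filter_upwards [ae_all_iff.2 fun z : X × X => Lp.coeFn_sub (F z.1) (F z.2)] with ω hω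
  have hφ := h fun x => F x ω
  rw [integral_fintype .of_finite, integral_fintype .of_finite] at hφ
  simpa only [hω, Pi.sub_apply] using hφ

end MeasureTheory

theorem stmt13_general {X : Type*} [MetricSpace X] [Fintype X] [MeasurableSpace X] [BorelSpace X]
    (p r : ℝ) (hr : 0 < r)
    (J : ℝ → ℝ) (hJpos : 0 < J r)
    (P Q : Measure (X × X)) [IsProbabilityMeasure P] [IsProbabilityMeasure Q]
    (hPsupp : P {z : X × X | r ≤ dist z.1 z.2}ᶜ = 0)
    (hPoincare : ∀ φ : X → ℝ,
      ∫ z, (|φ z.1 - φ z.2| / J r) ^ p ∂P ≤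
        ∫ z, (|φ z.1 - φ z.2| / dist z.1 z.2) ^ p ∂Q) :
    ∀ {Ω : Type} [MeasurableSpace Ω] (ν : Measure Ω) [Fact (1 ≤ ENNReal.ofReal p)]
      (F : X → Lp ℝ (ENNReal.ofReal p) ν) (A B : ℝ), 0 < A → 0 < B →
      (∀ x y : X, dist x y ≤ A * ‖F x - F y‖) →
      (∀ x y : X, ‖F x - F y‖ ≤ B * dist x y) →
      r / J r ≤ A * B := by
  intro Ω _ ν _ F A B hA hB hF_lower hF_upper
  have hp : 0 < p := zero_lt_one.trans_le (ENNReal.one_le_ofReal.mp Fact.out)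
  have hP : ∀ᵐ z ∂P, r ≤ dist z.1 z.2 := ae_iff.2 (by rwa [compl_ofPred] at hPsupp)
  have lower : (r / (A * J r)) ^ p ≤ ∫ z, (‖F z.1 - F z.2‖ / J r) ^ p ∂P :=
    calc (r / (A * J r)) ^ p = ∫ _, (r / (A * J r)) ^ p ∂P := by simp
      _ ≤ _ := by
        refine integral_mono_ae (integrable_const _) .of_finite (hP.mono fun z hz => ?_)
        refine Real.rpow_le_rpow (by positivity) ?_ hp.le
        rw [← div_div]
        gcongr
        exact (div_le_iff₀' hA).2 (hz.trans (hF_lower _ _))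
  have upper : ∫ z, (‖F z.1 - F z.2‖ / dist z.1 z.2) ^ p ∂Q ≤ B ^ p :=
    calc _ ≤ ∫ _, B ^ p ∂Q := integral_mono .of_finite (integrable_const _) fun z =>
          Real.rpow_le_rpow (by positivity) (div_le_of_le_mul₀ dist_nonneg hB.le (hF_upper _ _))
            hp.le
      _ = B ^ p := by simp
  have key := lower.trans <| (integral_norm_sub_div_rpow_le_of_forall_real P Q
    (fun _ => hJpos.le) (fun _ => dist_nonneg) hPoincare F).trans upper
  rw [Real.rpow_le_rpow_iff (by positivity) hB.le hp, div_le_iff₀ (by positivity)] at key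
  rw [div_le_iff₀ hJpos]
  linarith

/-- A finite metric space satisfying P(J,p) at scale `r` (with `0 < J r < r`) has
`L^p`-distortion at least `r / J r`: every bi-Lipschitz embedding `F` into an `L^p`-space
with `dist x y ≤ A·‖F x − F y‖` and `‖F x − F y‖ ≤ B·dist x y` satisfies `r / J r ≤ A·B`. -/
theorem stmt13 {X : Type*} [MetricSpace X] [Fintype X] [MeasurableSpace X] [BorelSpace X]
    (p r : ℝ) (hp : 1 < p) (hr : 0 < r)
    (J : ℝ → ℝ) (hJpos : 0 < J r) (hJr : J r < r)
    (P Q : Measure (X × X)) [IsProbabilityMeasure P] [IsProbabilityMeasure Q]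
    (hPsupp : P {z : X × X | r ≤ dist z.1 z.2}ᶜ = 0)
    (hQsupp : Q {z : X × X | 1 ≤ dist z.1 z.2}ᶜ = 0)
    (hPoincare : ∀ φ : X → ℝ,
      ∫ z, (|φ z.1 - φ z.2| / J r) ^ p ∂P ≤
        ∫ z, (|φ z.1 - φ z.2| / dist z.1 z.2) ^ p ∂Q) :
    ∀ {Ω : Type} [MeasurableSpace Ω] (ν : Measure Ω) [Fact (1 ≤ ENNReal.ofReal p)]
      (F : X → Lp ℝ (ENNReal.ofReal p) ν) (A B : ℝ), 0 < A → 0 < B →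
      (∀ x y : X, dist x y ≤ A * ‖F x - F y‖) →
      (∀ x y : X, ‖F x - F y‖ ≤ B * dist x y) →
      r / J r ≤ A * B :=
  stmt13_general p r hr J hJpos P Q hPsupp hPoincare
end

section
/- For 1 ≤ p ≤ q < ∞ and unit-norm-bounded families in L^p: if (X,d,μ) has Property A(J,p) (maps ψ_n : X → L^p(X) with ‖ψ_{n,x}‖_p ≥ J(n), ‖ψ_{n,x} − ψ_{n,y}‖_p ≤ d(x,y), supp ψ_{n,x} ⊆ B(x,n)), then taking φ_{n,x} = |ψ_{n,x}|^{p/q}·sgn(ψ_{n,x}) yields Property A(J^{p/q}, q): ‖φ_{n,x}‖_q = ‖ψ_{n,x}‖_p^{p/q} ≥ J(n)^{p/q}, supp φ_{n,x} ⊆ B(x,n), and ‖φ_{n,x} − φ_{n,y}‖_q ≤ 2^{1−p/q}·‖ψ_{n,x} − ψ_{n,y}‖_p^{p/q} (so after rescaling the ψ's, A(J,p) implies A(c·J^{p/q}, q)). -/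
open MeasureTheory

/-- Subadditivity of `t ^ θ` for `0 < θ ≤ 1` on nonnegative reals. -/
lemma aux_rpow_sub {θ : ℝ} (hθ0 : 0 < θ) (hθ1 : θ ≤ 1) {a b : ℝ} (ha : 0 ≤ a) (hb : 0 ≤ b) :
    (a + b) ^ θ ≤ a ^ θ + b ^ θ := by
  have h := NNReal.rpow_add_le_add_rpow a.toNNReal b.toNNReal hθ0.le hθ1
  have := (NNReal.coe_le_coe).2 h
  simpa [NNReal.coe_rpow, Real.coe_toNNReal _ ha, Real.coe_toNNReal _ hb,
    Real.coe_toNNReal _ (add_nonneg ha hb), ← Real.toNNReal_add ha hb] using this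

/-- Concavity-type bound: `a^θ + b^θ ≤ 2^(1-θ) (a+b)^θ` for `0 < θ ≤ 1`. -/
lemma aux_rpow_conc {θ : ℝ} (hθ0 : 0 < θ) (hθ1 : θ ≤ 1) {a b : ℝ} (ha : 0 ≤ a) (hb : 0 ≤ b) :
    a ^ θ + b ^ θ ≤ 2 ^ (1 - θ) * (a + b) ^ θ := by
  have hp : (1 : ℝ) ≤ 1 / θ := by
    rw [le_div_iff₀ hθ0]; simpa using hθ1
  have h := NNReal.rpow_add_le_mul_rpow_add_rpow (a.toNNReal ^ θ) (b.toNNReal ^ θ) hp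
  rw [← NNReal.rpow_mul, ← NNReal.rpow_mul, mul_one_div_cancel hθ0.ne', NNReal.rpow_one,
    NNReal.rpow_one] at h
  have h2 : (a.toNNReal ^ θ + b.toNNReal ^ θ : NNReal)
      ≤ ((2 : NNReal) ^ ((1:ℝ) / θ - 1) * (a.toNNReal + b.toNNReal)) ^ θ := by
    calc (a.toNNReal ^ θ + b.toNNReal ^ θ : NNReal)
        = ((a.toNNReal ^ θ + b.toNNReal ^ θ) ^ ((1:ℝ)/θ)) ^ θ := by
          rw [← NNReal.rpow_mul, one_div_mul_cancel hθ0.ne', NNReal.rpow_one]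
      _ ≤ _ := NNReal.rpow_le_rpow h hθ0.le
  rw [NNReal.mul_rpow, ← NNReal.rpow_mul, sub_mul, one_div_mul_cancel hθ0.ne', one_mul] at h2
  have := (NNReal.coe_le_coe).2 h2
  simpa [NNReal.coe_rpow, Real.coe_toNNReal _ ha, Real.coe_toNNReal _ hb,
    Real.coe_toNNReal _ (add_nonneg ha hb), ← Real.toNNReal_add ha hb] using this

/-- `|a^θ - b^θ| ≤ |a-b|^θ` for nonnegative `a, b`. -/
lemma aux_abs_rpow_sub {θ : ℝ} (hθ0 : 0 < θ) (hθ1 : θ ≤ 1) {a b : ℝ} (ha : 0 ≤ a) (hb : 0 ≤ b) :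
    |a ^ θ - b ^ θ| ≤ |a - b| ^ θ := by
  wlog hba : b ≤ a generalizing a b
  · rw [abs_sub_comm, abs_sub_comm a b]; exact this hb ha (le_of_not_ge hba)
  have h1 : a ^ θ ≤ (a - b) ^ θ + b ^ θ := by
    have := aux_rpow_sub hθ0 hθ1 (sub_nonneg.2 hba) hb
    rwa [sub_add_cancel] at this
  have h2 : b ^ θ ≤ a ^ θ := Real.rpow_le_rpow hb hba hθ0.le
  rw [abs_of_nonneg (sub_nonneg.2 h2), abs_of_nonneg (sub_nonneg.2 hba)]
  linarith

/-- The value of the Mazur map on a nonnegative real. -/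
lemma aux_phi_nonneg {θ : ℝ} (hθ0 : 0 < θ) {a : ℝ} (ha : 0 ≤ a) :
    |a| ^ θ * Real.sign a = a ^ θ := by
  rcases eq_or_lt_of_le ha with h | h
  · simp [← h, Real.sign_zero, Real.zero_rpow hθ0.ne']
  · rw [Real.sign_of_pos h, abs_of_pos h, mul_one]

/-- The Mazur map is odd. -/
lemma aux_phi_neg {θ : ℝ} (a : ℝ) :
    |(-a)| ^ θ * Real.sign (-a) = -(|a| ^ θ * Real.sign a) := by
  rw [abs_neg, Real.sign_neg, mul_neg]

/-- The key scalar estimate for the Mazur map. -/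
lemma aux_key {θ : ℝ} (hθ0 : 0 < θ) (hθ1 : θ ≤ 1) (a b : ℝ) :
    |(|a| ^ θ * Real.sign a) - (|b| ^ θ * Real.sign b)| ≤ 2 ^ (1 - θ) * |a - b| ^ θ := by
  have h2 : (1 : ℝ) ≤ 2 ^ (1 - θ) := by
    have := Real.rpow_le_rpow_of_exponent_le (by norm_num : (1:ℝ) ≤ 2) (sub_nonneg.2 hθ1)
    simpa using this
  -- mixed-sign case helper
  have mixed : ∀ a b : ℝ, 0 ≤ a → b ≤ 0 →
      |(|a| ^ θ * Real.sign a) - (|b| ^ θ * Real.sign b)| ≤ 2 ^ (1 - θ) * |a - b| ^ θ := by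
    intro a b ha hb
    have hb' : 0 ≤ -b := neg_nonneg.2 hb
    rw [show b = -(-b) by ring, aux_phi_neg, aux_phi_nonneg hθ0 ha, aux_phi_nonneg hθ0 hb',
      sub_neg_eq_add, sub_neg_eq_add,
      abs_of_nonneg (add_nonneg (Real.rpow_nonneg ha θ) (Real.rpow_nonneg hb' θ)),
      abs_of_nonneg (add_nonneg ha hb')]
    exact aux_rpow_conc hθ0 hθ1 ha hb'
  -- same nonneg sign helper
  have same : ∀ a b : ℝ, 0 ≤ a → 0 ≤ b →
      |(|a| ^ θ * Real.sign a) - (|b| ^ θ * Real.sign b)| ≤ 2 ^ (1 - θ) * |a - b| ^ θ := by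
    intro a b ha hb
    rw [aux_phi_nonneg hθ0 ha, aux_phi_nonneg hθ0 hb]
    calc |a ^ θ - b ^ θ| ≤ |a - b| ^ θ := aux_abs_rpow_sub hθ0 hθ1 ha hb
      _ ≤ 2 ^ (1 - θ) * |a - b| ^ θ :=
        le_mul_of_one_le_left (Real.rpow_nonneg (abs_nonneg _) θ) h2
  rcases le_total 0 a with ha | ha <;> rcases le_total 0 b with hb | hb
  · exact same a b ha hb
  · exact mixed a b ha hb
  · rw [abs_sub_comm, abs_sub_comm a b]; exact mixed b a hb ha
  · have ha' : 0 ≤ -a := neg_nonneg.2 ha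
    have hb' : 0 ≤ -b := neg_nonneg.2 hb
    have := same (-a) (-b) ha' hb'
    rw [aux_phi_neg, aux_phi_neg, neg_sub_neg, abs_sub_comm, neg_sub_neg, abs_sub_comm b a]
      at this
    exact this

/-- The Mazur-type map `T f = |f|^{p/q} sgn f` transforms Property A(J,p) data into
Property A(J^{p/q},q) data: `|T f|^q = |f|^p` pointwise (so `‖T f‖_q = ‖f‖_p^{p/q}`),
`T f` vanishes where `f` does (supports are preserved), and
`|T f − T g|^q ≤ 2^{q−p}·|f − g|^p` pointwise, hence also after integration. -/
theorem stmt17 {X : Type*} [MeasurableSpace X] (μ : Measure X)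
    (p q : ℝ) (hp : 1 ≤ p) (hpq : p ≤ q) (f g : X → ℝ) :
    (∀ x, |(|f x| ^ (p / q) * Real.sign (f x))| ^ q = |f x| ^ p) ∧
    (∀ x, f x = 0 → |f x| ^ (p / q) * Real.sign (f x) = 0) ∧
    (∀ x, |(|f x| ^ (p / q) * Real.sign (f x)) - (|g x| ^ (p / q) * Real.sign (g x))| ^ q ≤
        2 ^ (q - p) * |f x - g x| ^ p) ∧
    (∫⁻ x, ENNReal.ofReal (|(|f x| ^ (p / q) * Real.sign (f x))| ^ q) ∂μ) =
        ∫⁻ x, ENNReal.ofReal (|f x| ^ p) ∂μ ∧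
    (∫⁻ x, ENNReal.ofReal
          (|(|f x| ^ (p / q) * Real.sign (f x)) - (|g x| ^ (p / q) * Real.sign (g x))| ^ q)
        ∂μ) ≤
      ENNReal.ofReal (2 ^ (q - p)) * ∫⁻ x, ENNReal.ofReal (|f x - g x| ^ p) ∂μ ∧
    ((∫⁻ x, ENNReal.ofReal (|(|f x| ^ (p / q) * Real.sign (f x))| ^ q) ∂μ) ^ (1 / q)) =
      ((∫⁻ x, ENNReal.ofReal (|f x| ^ p) ∂μ) ^ (1 / p)) ^ (p / q) := by
  have hp0 : 0 < p := lt_of_lt_of_le one_pos hp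
  have hq0 : 0 < q := lt_of_lt_of_le hp0 hpq
  set θ : ℝ := p / q with hθ
  have hθ0 : 0 < θ := div_pos hp0 hq0
  have hθ1 : θ ≤ 1 := div_le_one_of_le₀ hpq hq0.le
  have hθq : θ * q = p := div_mul_cancel₀ p hq0.ne'
  -- Part 1
  have part1 : ∀ a : ℝ, |(|a| ^ θ * Real.sign a)| ^ q = |a| ^ p := by
    intro a
    rcases eq_or_ne a 0 with rfl | ha
    · simp [Real.sign_zero, Real.zero_rpow hp0.ne', Real.zero_rpow hq0.ne']
    · have : |(|a| ^ θ * Real.sign a)| = |a| ^ θ := by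
        rw [abs_mul, abs_of_nonneg (Real.rpow_nonneg (abs_nonneg a) θ)]
        rcases lt_or_gt_of_ne ha with h | h
        · rw [Real.sign_of_neg h]; simp
        · rw [Real.sign_of_pos h]; simp
      rw [this, ← Real.rpow_mul (abs_nonneg a), hθq]
  -- Part 3
  have part3 : ∀ a b : ℝ, |(|a| ^ θ * Real.sign a) - (|b| ^ θ * Real.sign b)| ^ q ≤
      2 ^ (q - p) * |a - b| ^ p := by
    intro a b
    have key := aux_key hθ0 hθ1 a b
    have h1 : |(|a| ^ θ * Real.sign a) - (|b| ^ θ * Real.sign b)| ^ q ≤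
        (2 ^ (1 - θ) * |a - b| ^ θ) ^ q :=
      Real.rpow_le_rpow (abs_nonneg _) key hq0.le
    calc |(|a| ^ θ * Real.sign a) - (|b| ^ θ * Real.sign b)| ^ q
        ≤ (2 ^ (1 - θ) * |a - b| ^ θ) ^ q := h1
      _ = 2 ^ ((1 - θ) * q) * |a - b| ^ (θ * q) := by
          rw [Real.mul_rpow (Real.rpow_nonneg (by norm_num) _)
            (Real.rpow_nonneg (abs_nonneg _) _), ← Real.rpow_mul (by norm_num : (0:ℝ) ≤ 2),
            ← Real.rpow_mul (abs_nonneg _)]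
      _ = 2 ^ (q - p) * |a - b| ^ p := by
          rw [hθq]
          congr 1
          rw [sub_mul, one_mul, hθ, div_mul_cancel₀ p hq0.ne']
  refine ⟨fun x => part1 (f x), ?_, fun x => part3 (f x) (g x), ?_, ?_, ?_⟩
  · intro x hx; rw [hx]; simp [Real.sign_zero]
  · exact lintegral_congr fun x => by rw [part1 (f x)]
  · calc (∫⁻ x, ENNReal.ofReal
          (|(|f x| ^ θ * Real.sign (f x)) - (|g x| ^ θ * Real.sign (g x))| ^ q) ∂μ)
        ≤ ∫⁻ x, ENNReal.ofReal (2 ^ (q - p) * |f x - g x| ^ p) ∂μ :=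
          lintegral_mono fun x => ENNReal.ofReal_le_ofReal (part3 (f x) (g x))
      _ = ∫⁻ x, ENNReal.ofReal (2 ^ (q - p)) * ENNReal.ofReal (|f x - g x| ^ p) ∂μ := by
          simp_rw [← ENNReal.ofReal_mul (Real.rpow_nonneg (by norm_num : (0:ℝ) ≤ 2) _)]
      _ = ENNReal.ofReal (2 ^ (q - p)) * ∫⁻ x, ENNReal.ofReal (|f x - g x| ^ p) ∂μ :=
          lintegral_const_mul' _ _ ENNReal.ofReal_ne_top
  · rw [lintegral_congr fun x => by rw [part1 (f x)], ← ENNReal.rpow_mul]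
    congr 1
    rw [div_mul_div_comm, one_mul, div_eq_div_iff hq0.ne' (by positivity), one_mul, mul_comm]
end

section
/- Let (X,d,μ) and (Y,d',ν) be discrete metric measure spaces with counting measure and suppose F : X → Y is a bijective bi-Lipschitz map with constants λ ≥ 1 (λ^{-1} d(x,y) ≤ d'(F(x),F(y)) ≤ λ d(x,y)). If X satisfies Property A(J,p), then Y satisfies Property A(J', p) with J'(t) = J(t/λ)/λ: for each n, ψ'_{n, F(x)}(F(z)) := λ^{-1}·ψ_{⌊n/λ⌋, x}(z) defines maps with ‖ψ'_{n,y}‖_p ≥ J(⌊n/λ⌋)/λ, ‖ψ'_{n,y} − ψ'_{n,y'}‖_p ≤ d'(y,y'), and supp ψ'_{n,y} ⊆ B(y, n). -/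
set_option maxHeartbeats 800000

open Metric

/-- Bi-Lipschitz invariance of Property A(J,p): if `F : X → Y` is a bijective
bi-Lipschitz map with constant `λ` and `X` has Property A(J,p) (with values in `ℓ^p(X)`),
then `Y` has Property A(J',p) with `J'(n) = J(⌊n/λ⌋)/λ`, witnessed by
`ψ'_{n,F x}(F z) = λ⁻¹ ψ_{⌊n/λ⌋,x}(z)`. -/
theorem stmt18 {X Y : Type*} [MetricSpace X] [MetricSpace Y]
    (p : ℝ) (hp : 1 ≤ p) [Fact (1 ≤ ENNReal.ofReal p)]
    (lam : ℝ) (hlam : 1 ≤ lam)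
    (F : X ≃ Y)
    (hF1 : ∀ x y : X, lam⁻¹ * dist x y ≤ dist (F x) (F y))
    (hF2 : ∀ x y : X, dist (F x) (F y) ≤ lam * dist x y)
    (J : ℝ → ℝ) (hJ : Monotone J)
    (ψ : ℕ → X → lp (fun _ : X => ℝ) (ENNReal.ofReal p))
    (hnorm : ∀ (n : ℕ) (x : X), J n ≤ ‖ψ n x‖)
    (hlip : ∀ (n : ℕ) (x y : X), ‖ψ n x - ψ n y‖ ≤ dist x y)
    (hsupp : ∀ (n : ℕ) (x z : X), z ∉ closedBall x (n : ℝ) → (ψ n x : ∀ _ : X, ℝ) z = 0) :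
    ∃ ψ' : ℕ → Y → lp (fun _ : Y => ℝ) (ENNReal.ofReal p),
      (∀ (n : ℕ) (x z : X),
        (ψ' n (F x) : ∀ _ : Y, ℝ) (F z) =
          lam⁻¹ * (ψ (Nat.floor ((n : ℝ) / lam)) x : ∀ _ : X, ℝ) z) ∧
      (∀ (n : ℕ) (y : Y), J (Nat.floor ((n : ℝ) / lam)) / lam ≤ ‖ψ' n y‖) ∧
      (∀ (n : ℕ) (y y' : Y), ‖ψ' n y - ψ' n y'‖ ≤ dist y y') ∧
      (∀ (n : ℕ) (y : Y) (w : Y), w ∉ closedBall y (n : ℝ) → (ψ' n y : ∀ _ : Y, ℝ) w = 0) := by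
  have hp0 : 0 < p := lt_of_lt_of_le one_pos hp
  have hlam0 : 0 < lam := lt_of_lt_of_le one_pos hlam
  have hqt : (ENNReal.ofReal p).toReal = p := ENNReal.toReal_ofReal hp0.le
  have hq : 0 < (ENNReal.ofReal p).toReal := by rw [hqt]; exact hp0
  have hq0 : ENNReal.ofReal p ≠ 0 := by
    intro h
    rw [h] at hqt
    simp at hqt
    exact hp0.ne' hqt.symm
  -- the reindexing map
  have hmem : ∀ f : lp (fun _ : X => ℝ) (ENNReal.ofReal p),
      Memℓp (fun w : Y => (f : ∀ _ : X, ℝ) (F.symm w)) (ENNReal.ofReal p) := by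
    intro f
    exact memℓp_gen ((F.symm.summable_iff (f := fun x => ‖(f : ∀ _ : X, ℝ) x‖ ^ (ENNReal.ofReal p).toReal)).2
      ((lp.memℓp f).summable hq))
  let T : lp (fun _ : X => ℝ) (ENNReal.ofReal p) → lp (fun _ : Y => ℝ) (ENNReal.ofReal p) :=
    fun f => ⟨fun w => (f : ∀ _ : X, ℝ) (F.symm w), hmem f⟩
  have hTapp : ∀ (f : lp (fun _ : X => ℝ) (ENNReal.ofReal p)) (w : Y),
      (T f : ∀ _ : Y, ℝ) w = (f : ∀ _ : X, ℝ) (F.symm w) := fun f w => rfl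
  have hTnorm : ∀ f : lp (fun _ : X => ℝ) (ENNReal.ofReal p), ‖T f‖ = ‖f‖ := by
    intro f
    rw [lp.norm_eq_tsum_rpow hq, lp.norm_eq_tsum_rpow hq]
    congr 1
    exact F.symm.tsum_eq (fun x => ‖(f : ∀ _ : X, ℝ) x‖ ^ (ENNReal.ofReal p).toReal)
  have hTsub : ∀ f g : lp (fun _ : X => ℝ) (ENNReal.ofReal p), T f - T g = T (f - g) := by
    intro f g
    apply Subtype.ext
    funext w
    have h1 : ((T f - T g : lp (fun _ : Y => ℝ) (ENNReal.ofReal p)) : ∀ _ : Y, ℝ) w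
        = (T f : ∀ _ : Y, ℝ) w - (T g : ∀ _ : Y, ℝ) w := by
      rw [lp.coeFn_sub]; rfl
    have h2 : ((f - g : lp (fun _ : X => ℝ) (ENNReal.ofReal p)) : ∀ _ : X, ℝ) (F.symm w)
        = (f : ∀ _ : X, ℝ) (F.symm w) - (g : ∀ _ : X, ℝ) (F.symm w) := by
      rw [lp.coeFn_sub]; rfl
    show ((T f - T g : lp (fun _ : Y => ℝ) (ENNReal.ofReal p)) : ∀ _ : Y, ℝ) w
        = ((f - g : lp (fun _ : X => ℝ) (ENNReal.ofReal p)) : ∀ _ : X, ℝ) (F.symm w)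
    rw [h1, h2, hTapp, hTapp]
  refine ⟨fun n y => lam⁻¹ • T (ψ (Nat.floor ((n : ℝ) / lam)) (F.symm y)), ?_, ?_, ?_, ?_⟩
  · intro n x z
    have : ((lam⁻¹ • T (ψ (Nat.floor ((n : ℝ) / lam)) (F.symm (F x))) :
        lp (fun _ : Y => ℝ) (ENNReal.ofReal p)) : ∀ _ : Y, ℝ) (F z)
        = lam⁻¹ * (T (ψ (Nat.floor ((n : ℝ) / lam)) (F.symm (F x))) : ∀ _ : Y, ℝ) (F z) := by
      rw [lp.coeFn_smul]; rfl
    rw [this, hTapp, Equiv.symm_apply_apply, Equiv.symm_apply_apply]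
  · intro n y
    rw [lp.norm_const_smul hq0, hTnorm]
    have h1 : ‖(lam⁻¹ : ℝ)‖ = lam⁻¹ := by
      rw [Real.norm_eq_abs, abs_of_pos (inv_pos.2 hlam0)]
    rw [h1, div_eq_inv_mul]
    exact mul_le_mul_of_nonneg_left (hnorm _ _) (inv_nonneg.2 hlam0.le)
  · intro n y y'
    rw [← smul_sub, hTsub, lp.norm_const_smul hq0, hTnorm]
    have h1 : ‖(lam⁻¹ : ℝ)‖ = lam⁻¹ := by
      rw [Real.norm_eq_abs, abs_of_pos (inv_pos.2 hlam0)]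
    rw [h1]
    calc lam⁻¹ * ‖ψ (Nat.floor ((n : ℝ) / lam)) (F.symm y)
          - ψ (Nat.floor ((n : ℝ) / lam)) (F.symm y')‖
        ≤ lam⁻¹ * dist (F.symm y) (F.symm y') :=
          mul_le_mul_of_nonneg_left (hlip _ _ _) (inv_nonneg.2 hlam0.le)
      _ ≤ dist (F (F.symm y)) (F (F.symm y')) := hF1 _ _
      _ = dist y y' := by rw [Equiv.apply_symm_apply, Equiv.apply_symm_apply]
  · intro n y w hw
    have hcoe : ((lam⁻¹ • T (ψ (Nat.floor ((n : ℝ) / lam)) (F.symm y)) :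
        lp (fun _ : Y => ℝ) (ENNReal.ofReal p)) : ∀ _ : Y, ℝ) w
        = lam⁻¹ * (ψ (Nat.floor ((n : ℝ) / lam)) (F.symm y) : ∀ _ : X, ℝ) (F.symm w) := by
      rw [lp.coeFn_smul]; rfl
    rw [hcoe]
    have hz : F.symm w ∉ closedBall (F.symm y) ((Nat.floor ((n : ℝ) / lam) : ℕ) : ℝ) := by
      intro hmem'
      apply hw
      rw [mem_closedBall] at hmem' ⊢
      calc dist w y = dist (F (F.symm w)) (F (F.symm y)) := by
              rw [Equiv.apply_symm_apply, Equiv.apply_symm_apply]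
        _ ≤ lam * dist (F.symm w) (F.symm y) := hF2 _ _
        _ ≤ lam * ((Nat.floor ((n : ℝ) / lam) : ℕ) : ℝ) :=
              mul_le_mul_of_nonneg_left hmem' hlam0.le
        _ ≤ lam * ((n : ℝ) / lam) := by
              apply mul_le_mul_of_nonneg_left _ hlam0.le
              exact Nat.floor_le (by positivity)
        _ = (n : ℝ) := by field_simp
    rw [hsupp _ _ _ hz, mul_zero]
end

section
/- There is no sublinear nondecreasing function h : ℝ≥0 → ℝ≥0 (i.e. h(t)/t → 0) that dominates all nondecreasing functions f satisfying condition (C_p): for every sublinear nondecreasing h and every p ≥ 1, there exists a nondecreasing f with ∫₁^∞ (f(t)/t)^p dt/t < ∞ and f(t_n) > h(t_n) along some sequence t_n → ∞. -/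
open MeasureTheory Set Filter Topology

/-!
Sublinearity of `h` lets us pick `t n → ∞` along which `(h (t n) + 1) / t n` decays
geometrically. The step function `f` with value `h (t n) + 1` on `[t n, t (n + 1))` exceeds `h`
at every `t n`, while its `n`-th step contributes at most
`∫_{t n}^∞ (f (t n) / x)^p dx/x = (f (t n) / t n)^p / p` to the integral in `(C_p)`, and these
bounds are summable.
-/

lemma Ici_subset_iUnion_Ico_of_tendsto {α : Type*} [LinearOrder α] [NoMaxOrder α] {t : ℕ → α}
    (ht : Tendsto t atTop atTop) : Ici (t 0) ⊆ ⋃ n, Ico (t n) (t (n + 1)) := by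
  intro x hx
  obtain ⟨N, hN⟩ := (ht.eventually_gt_atTop x).exists
  have hmem := Ico_subset_biUnion_Ico N t ⟨hx, hN⟩
  simp only [mem_iUnion, Finset.mem_range, exists_prop] at hmem ⊢
  exact hmem.imp fun _ => And.right

lemma eventually_add_one_le_mul_of_tendsto_div {h : ℝ → ℝ}
    (hsub : Tendsto (fun t => h t / t) atTop (𝓝 0)) {ε : ℝ} (hε : 0 < ε) :
    ∀ᶠ x in atTop, h x + 1 ≤ ε * x := by
  filter_upwards [hsub.eventually_lt_const (half_pos hε), eventually_ge_atTop (2 / ε)]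
    with x hhx hx
  have hx0 : 0 < x := (by positivity : 0 < 2 / ε).trans_le hx
  rw [div_lt_iff₀ hx0] at hhx
  rw [div_le_iff₀ hε] at hx
  linarith

lemma exists_seq_tendsto_of_eventually {P : ℕ → ℝ → Prop} (hP : ∀ n, ∀ᶠ x in atTop, P n x)
    (a : ℝ) : ∃ t : ℕ → ℝ, t 0 = a ∧ StrictMono t ∧ Tendsto t atTop atTop ∧
      ∀ n, P n (t (n + 1)) := by
  choose T hT using fun n b => ((hP n).and (eventually_ge_atTop (b + 1))).exists
  let t : ℕ → ℝ := fun n => Nat.rec a (fun n b => T n b) n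
  have ht_succ : ∀ n, t n + 1 ≤ t (n + 1) := fun n => (hT n (t n)).2
  have ht_ge : ∀ n : ℕ, a + n ≤ t n := by
    intro n
    induction n with
    | zero => simp [t]
    | succ n ih => push_cast; linarith [ht_succ n]
  refine ⟨t, rfl, strictMono_nat_of_lt_succ fun n => by linarith [ht_succ n], ?_,
    fun n => (hT n (t n)).1⟩
  exact tendsto_atTop_mono ht_ge (tendsto_atTop_add_const_left _ a tendsto_natCast_atTop_atTop)

lemma summable_rpow_of_le_geometric {a : ℕ → ℝ} {r p : ℝ} (hr0 : 0 ≤ r) (hr1 : r < 1)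
    (hp : 0 < p) (ha0 : ∀ n, 0 ≤ a n) (ha : ∀ n, a n ≤ r ^ n) : Summable fun n => a n ^ p := by
  refine (summable_geometric_of_lt_one (Real.rpow_nonneg hr0 p)
    (Real.rpow_lt_one hr0 hr1 hp)).of_nonneg_of_le (fun n => Real.rpow_nonneg (ha0 n) p)
    fun n => ?_
  calc a n ^ p ≤ (r ^ n) ^ p := Real.rpow_le_rpow (ha0 n) (ha n) hp.le
    _ = (r ^ p) ^ n := (Real.rpow_pow_comm hr0 p n).symm

section PowerIntegral

variable {a x T p : ℝ}

lemma div_rpow_mul_inv_eq (ha : 0 ≤ a) (hx : 0 < x) :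
    (a / x) ^ p * (1 / x) = a ^ p * x ^ (-(p + 1)) := by
  rw [Real.div_rpow ha hx.le, neg_add, Real.rpow_add hx, Real.rpow_neg hx.le, Real.rpow_neg_one]
  field_simp

lemma integrableOn_Ioi_div_rpow_mul_inv (ha : 0 ≤ a) (hT : 0 < T) (hp : 0 < p) :
    IntegrableOn (fun x => (a / x) ^ p * (1 / x)) (Ioi T) :=
  IntegrableOn.congr_fun
    ((integrableOn_Ioi_rpow_of_lt (a := -(p + 1)) (by linarith) hT).const_mul (a ^ p))
    (fun x hx => (div_rpow_mul_inv_eq ha (hT.trans hx)).symm) measurableSet_Ioi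

lemma integral_Ioi_div_rpow_mul_inv (ha : 0 ≤ a) (hT : 0 < T) (hp : 0 < p) :
    ∫ x in Ioi T, (a / x) ^ p * (1 / x) = (a / T) ^ p / p := by
  rw [setIntegral_congr_fun measurableSet_Ioi
      (fun x hx => div_rpow_mul_inv_eq ha (hT.trans hx)),
    integral_const_mul, integral_Ioi_rpow_of_lt (by linarith) hT,
    show -(p + 1) + 1 = -p by ring, Real.rpow_neg hT.le, Real.div_rpow ha hT.le]
  field_simp

end PowerIntegral

/-- For monotone `t` and `c`, the step function equal to `c n` on `[t n, t (n + 1))`. -/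
noncomputable def stepFun (t c : ℕ → ℝ) (x : ℝ) : ℝ :=
  ⨆ n, if t n ≤ x then c n else 0

namespace stepFun

variable {t c : ℕ → ℝ} (ht : Monotone t) (ht_top : Tendsto t atTop atTop) (hc : Monotone c)
  (hc0 : 0 ≤ c 0)
include ht ht_top hc hc0

lemma bddAbove (x : ℝ) : BddAbove (range fun n => if t n ≤ x then c n else 0) := by
  obtain ⟨N, hN⟩ := (ht_top.eventually_gt_atTop x).exists
  refine ⟨c N, ?_⟩
  rintro _ ⟨n, rfl⟩
  dsimp only
  split_ifs with hn
  · exact hc (not_le.1 fun hNn => (hN.trans_le (ht hNn)).not_ge hn).le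
  · exact hc0.trans (hc (Nat.zero_le N))

lemma nonneg (x : ℝ) : 0 ≤ stepFun t c x := by
  refine le_ciSup_of_le (bddAbove ht ht_top hc hc0 x) 0 ?_
  split_ifs <;> simp [hc0]

lemma monotone : Monotone (stepFun t c) := by
  intro x y hxy
  refine ciSup_mono (bddAbove ht ht_top hc hc0 y) fun n => ?_
  split_ifs with hx hy hy
  · exact le_rfl
  · exact absurd (hx.trans hxy) hy
  · exact hc0.trans (hc (Nat.zero_le n))
  · exact le_rfl

lemma eq_of_mem_Ico {n : ℕ} {x : ℝ} (hx : x ∈ Ico (t n) (t (n + 1))) : stepFun t c x = c n := by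
  refine le_antisymm (ciSup_le fun m => ?_) ?_
  · split_ifs with hm
    · exact hc (Nat.lt_succ_iff.1 (not_le.1 fun hnm => (hx.2.trans_le (ht hnm)).not_ge hm))
    · exact hc0.trans (hc (Nat.zero_le n))
  · exact le_ciSup_of_le (bddAbove ht ht_top hc hc0 x) n (by simp [hx.1])

theorem integrableOn_Ici {p : ℝ} (ht0 : 0 < t 0) (hp : 0 < p)
    (hsum : Summable fun n => (c n / t n) ^ p) :
    IntegrableOn (fun x => (stepFun t c x / x) ^ p * (1 / x)) (Ici (t 0)) := by
  have htn : ∀ n, 0 < t n := fun n => ht0.trans_le (ht (Nat.zero_le n))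
  have hcn : ∀ n, 0 ≤ c n := fun n => hc0.trans (hc (Nat.zero_le n))
  have hpiece : ∀ n, ∀ x ∈ Ico (t n) (t (n + 1)),
      (stepFun t c x / x) ^ p * (1 / x) = (c n / x) ^ p * (1 / x) := fun n x hx => by
    rw [eq_of_mem_Ico ht ht_top hc hc0 hx]
  have hint : ∀ n, IntegrableOn (fun x => (c n / x) ^ p * (1 / x)) (Ici (t n)) := fun n =>
    (integrableOn_Ici_iff_integrableOn_Ioi).2 (integrableOn_Ioi_div_rpow_mul_inv (hcn n) (htn n) hp)
  have hpos : ∀ n, ∀ x ∈ Ici (t n), 0 ≤ (c n / x) ^ p * (1 / x) := fun n x hx => by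
    have := hcn n
    have := (htn n).trans_le hx
    positivity
  refine IntegrableOn.mono_set ?_ (Ici_subset_iUnion_Ico_of_tendsto ht_top)
  refine integrableOn_iUnion_of_summable_integral_norm (fun n => ((hint n).mono_set
    Ico_subset_Ici_self).congr_fun (fun x hx => (hpiece n x hx).symm) measurableSet_Ico) ?_
  refine (hsum.div_const p).of_nonneg_of_le (fun n => integral_nonneg fun _ => norm_nonneg _)
    fun n => ?_
  calc ∫ x in Ico (t n) (t (n + 1)), ‖(stepFun t c x / x) ^ p * (1 / x)‖
      = ∫ x in Ico (t n) (t (n + 1)), (c n / x) ^ p * (1 / x) :=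
        setIntegral_congr_fun measurableSet_Ico fun x hx => by
          rw [hpiece n x hx, Real.norm_of_nonneg (hpos n x hx.1)]
    _ ≤ ∫ x in Ici (t n), (c n / x) ^ p * (1 / x) :=
        setIntegral_mono_set (hint n) ((ae_restrict_mem measurableSet_Ici).mono (hpos n))
          Ico_subset_Ici_self.eventuallyLE
    _ = (c n / t n) ^ p / p := by
        rw [integral_Ici_eq_integral_Ioi, integral_Ioi_div_rpow_mul_inv (hcn n) (htn n) hp]

end stepFun

/-- No sublinear nondecreasing function dominates all functions satisfying `(C_p)`:
for every nondecreasing `h` with `h(t)/t → 0` and every `p ≥ 1`, there is a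
nondecreasing nonnegative `f` with `∫₁^∞ (f t / t)^p dt/t < ∞` which exceeds `h`
along a sequence tending to infinity. -/
theorem stmt19 (h : ℝ → ℝ) (hmono : Monotone h) (hnn : ∀ t, 0 ≤ h t)
    (hsub : Tendsto (fun t : ℝ => h t / t) atTop (nhds 0))
    (p : ℝ) (hp : 1 ≤ p) :
    ∃ f : ℝ → ℝ, Monotone f ∧ (∀ t, 0 ≤ f t) ∧
      IntegrableOn (fun t => (f t / t) ^ p * (1 / t)) (Ici (1 : ℝ)) ∧
      ∃ u : ℕ → ℝ, Tendsto u atTop atTop ∧ ∀ n, h (u n) < f (u n) := by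
  have hp0 : 0 < p := one_pos.trans_le hp
  obtain ⟨t, ht0, ht, ht_top, ht_small⟩ := exists_seq_tendsto_of_eventually
    (fun n => eventually_add_one_le_mul_of_tendsto_div hsub (pow_pos one_half_pos n)) 1
  set c : ℕ → ℝ := fun n => h (t n) + 1
  have hc : Monotone c := fun m n hmn => by simpa [c] using hmono (ht.monotone hmn)
  have hc0 : 0 ≤ c 0 := by linarith [hnn (t 0)]
  have htn : ∀ n, 0 < t n := fun n => by linarith [ht.monotone (Nat.zero_le n)]
  have hsum : Summable fun n => (c n / t n) ^ p := by
    refine (summable_nat_add_iff 1).1 (summable_rpow_of_le_geometric (r := 1 / 2) (by norm_num)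
      one_half_lt_one hp0 (fun n => ?_) fun n => (div_le_iff₀ (htn _)).2 (ht_small n))
    exact div_nonneg (by linarith [hnn (t (n + 1))]) (htn _).le
  refine ⟨stepFun t c, stepFun.monotone ht.monotone ht_top hc hc0,
    stepFun.nonneg ht.monotone ht_top hc hc0, ?_, t, ht_top, fun n => ?_⟩
  · simpa only [ht0] using
      stepFun.integrableOn_Ici ht.monotone ht_top hc hc0 (htn 0) hp0 hsum
  · rw [stepFun.eq_of_mem_Ico ht.monotone ht_top hc hc0 ⟨le_rfl, ht n.lt_succ_self⟩]
    exact lt_add_one _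
end
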